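/- arXiv:1909.01030 — 6 statements merged into one kernel-verified Lean document; each statement's English description precedes it below -/
import Mathlib

section
/- Let K be a field, m ≥ 1, and d1, …, dm, k natural numbers with k ≤ di for all i. The map Ψ sending a tuple (f1, …, fm, g), where f1, …, fm are monic polynomials over K of degrees d1−k, …, dm−k with no common non-unit factor and g is a monic polynomial of degree k, to the tuple (f1·g, …, fm·g), is a bijection onto the set of m-tuples (h1, …, hm) of monic polynomials of degrees d1, …, dm whose (monic) greatest common divisor has degree exactly k. -/
/-!
The inverse of `Ψ` divides a tuple by its monic gcd. That this is inverse to `Ψ` rests on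
`gcd (f₁ g, …, f_m g) = gcd (f₁, …, f_m) · g` for monic `g`, so that `g` is recovered from
`Ψ (f, g)` exactly when the `fᵢ` are coprime.
-/

open Polynomial

namespace Finset

variable {ι α : Type*} [CommMonoidWithZero α] [NormalizedGCDMonoid α] {s : Finset ι} {f : ι → α}

theorem gcd_eq_one_iff_forall_isUnit :
    s.gcd f = 1 ↔ ∀ p : α, (∀ i ∈ s, p ∣ f i) → IsUnit p := by
  refine ⟨fun h p hp => isUnit_of_dvd_one (h ▸ dvd_gcd hp), fun h => ?_⟩
  rw [← normalize_gcd, normalize_eq_one]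
  exact h _ fun i hi => gcd_dvd hi

end Finset

namespace Polynomial

variable {K ι : Type*} [Field K]

theorem Monic.div_of_dvd {p q : K[X]} (hp : p.Monic) (hq : q.Monic) (hqp : q ∣ p) :
    (p / q).Monic := by
  obtain ⟨c, rfl⟩ := hqp
  rw [mul_div_cancel_left₀ c hq.ne_zero]
  exact hq.of_mul_monic_left hp

theorem natDegree_div_of_dvd {p q : K[X]} (hq : q ≠ 0) (hqp : q ∣ p) :
    (p / q).natDegree = p.natDegree - q.natDegree := by
  obtain ⟨c, rfl⟩ := hqp
  rw [mul_div_cancel_left₀ c hq]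
  rcases eq_or_ne c 0 with rfl | hc
  · simp
  · rw [natDegree_mul hq hc, Nat.add_sub_cancel_left]

variable [DecidableEq K]

theorem Monic.finset_gcd_mul_right {s : Finset ι} {f : ι → K[X]} (hf : s.gcd f = 1) {g : K[X]}
    (hg : g.Monic) : (s.gcd fun i => f i * g) = g := by
  rw [Finset.gcd_mul_right, hf, one_mul, hg.normalize_eq_self]

theorem monic_finset_gcd {s : Finset ι} {f : ι → K[X]} {i : ι} (hi : i ∈ s) (hfi : f i ≠ 0) :
    (s.gcd f).Monic := by
  rw [← Finset.normalize_gcd]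
  exact monic_normalize fun h => hfi (Finset.gcd_eq_zero_iff.mp h i hi)

variable [Fintype ι]

noncomputable def cofactorsGcd (h : ι → K[X]) : (ι → K[X]) × K[X] :=
  (fun i => h i / Finset.univ.gcd h, Finset.univ.gcd h)

theorem cofactorsGcd_mul_right {f : ι → K[X]} (hf : Finset.univ.gcd f = 1) {g : K[X]}
    (hg : g.Monic) : cofactorsGcd (fun i => f i * g) = (f, g) := by
  simp only [cofactorsGcd, hg.finset_gcd_mul_right hf, mul_div_cancel_right₀ _ hg.ne_zero]

theorem mul_cofactorsGcd (h : ι → K[X]) (i : ι) :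
    (cofactorsGcd h).1 i * (cofactorsGcd h).2 = h i := by
  rcases eq_or_ne (Finset.univ.gcd h) 0 with hg | hg
  · simp [cofactorsGcd, hg, Finset.gcd_eq_zero_iff.mp hg i (Finset.mem_univ i)]
  · rw [mul_comm]
    exact EuclideanDomain.mul_div_cancel' hg (Finset.gcd_dvd (Finset.mem_univ i))

end Polynomial

/-- The map `Ψ : (f₁, …, f_m, g) ↦ (f₁·g, …, f_m·g)` is a bijection from the set of tuples
where the `fᵢ` are monic of degrees `dᵢ−k` with no common non-unit factor and `g` is monic of
degree `k`, onto the set of `m`-tuples of monic polynomials of degrees `d₁, …, d_m` whose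
monic gcd has degree exactly `k`. -/
theorem psi_bijOn_tuples (K : Type*) [Field K] [DecidableEq K] (m : ℕ) (hm : 1 ≤ m)
    (d : Fin m → ℕ) (k : ℕ) (hk : ∀ i, k ≤ d i) :
    Set.BijOn (fun t : (Fin m → K[X]) × K[X] => fun i => t.1 i * t.2)
      {t : (Fin m → K[X]) × K[X] |
        (∀ i, (t.1 i).Monic ∧ (t.1 i).natDegree = d i - k) ∧ t.2.Monic ∧
        t.2.natDegree = k ∧ (∀ p : K[X], (∀ i, p ∣ t.1 i) → IsUnit p)}
      {h : Fin m → K[X] | (∀ i, (h i).Monic ∧ (h i).natDegree = d i) ∧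
        (Finset.univ.gcd h).natDegree = k} := by
  have gcd_eq_one_iff (f : Fin m → K[X]) :
      Finset.univ.gcd f = 1 ↔ ∀ p : K[X], (∀ i, p ∣ f i) → IsUnit p := by
    simp [Finset.gcd_eq_one_iff_forall_isUnit]
  refine Set.InvOn.bijOn (f' := cofactorsGcd) ⟨?_, ?_⟩ ?_ ?_
  · rintro ⟨f, g⟩ ⟨-, hg, -, hcop⟩
    exact cofactorsGcd_mul_right ((gcd_eq_one_iff f).mpr hcop) hg
  · exact fun h _ => funext (mul_cofactorsGcd h)
  · rintro ⟨f, g⟩ ⟨hf, hg, rfl, hcop⟩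
    refine ⟨fun i => ⟨(hf i).1.mul hg, ?_⟩, ?_⟩
    · rw [natDegree_mul (hf i).1.ne_zero hg.ne_zero, (hf i).2, Nat.sub_add_cancel (hk i)]
    · rw [hg.finset_gcd_mul_right ((gcd_eq_one_iff f).mpr hcop)]
  · rintro h ⟨hh, rfl⟩
    have i₀ : Fin m := ⟨0, hm⟩
    have hg : (Finset.univ.gcd h).Monic :=
      monic_finset_gcd (Finset.mem_univ i₀) (hh i₀).1.ne_zero
    have hdvd i : Finset.univ.gcd h ∣ h i := Finset.gcd_dvd (Finset.mem_univ i)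
    refine ⟨fun i => ⟨(hh i).1.div_of_dvd hg (hdvd i), ?_⟩, hg, rfl, (gcd_eq_one_iff _).mp ?_⟩
    · simp only [cofactorsGcd, natDegree_div_of_dvd hg.ne_zero (hdvd i), (hh i).2]
    · exact Finset.gcd_div_eq_one (Finset.mem_univ i₀) (hh i₀).1.ne_zero
end

section
/- Let F_q be a finite field with q elements and let d1, d2 be natural numbers. The number of pairs (u, v) of coprime monic polynomials over F_q with deg u = d1 and deg v = d2 equals q^{d1+d2} − q^{d1+d2−1} if d1 > 0 and d2 > 0, and equals q^{d1+d2} if d1 = 0 or d2 = 0. -/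
/-!
Every pair `(u, v)` of monic polynomials factors uniquely as `(g * u', g * v')` with `g` monic
(their gcd) and `u', v'` coprime and monic. Sorting the `q ^ (a + b)` monic pairs of degrees
`(a, b)` by `k = deg g` gives, for the number `N a b` of coprime pairs,
`∑_{k ≤ min a b} q ^ k * N (a - k) (b - k) = q ^ (a + b)`. If `min a b = 0` the sum is just
`N a b`; otherwise the terms with `k ≥ 1` are `q` times the same sum for `(a - 1, b - 1)`,
that is `q ^ (a + b - 1)`.
-/

open Polynomial

namespace Polynomial

variable {K : Type*} [Field K]

theorem Monic.gcd_mul_mul_of_isCoprime [DecidableEq K] {g u v : K[X]} (hg : g.Monic)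
    (h : IsCoprime u v) : gcd (g * u) (g * v) = g := by
  have h1 : gcd u v = 1 := by
    rw [← normalize_gcd, normalize_eq_one, gcd_isUnit_iff]
    exact h
  rw [gcd_mul_left, h1, mul_one, hg.normalize_eq_self]

theorem exists_monic_mul_isCoprime {u : K[X]} (hu : u ≠ 0) (v : K[X]) :
    ∃ g u' v' : K[X], g.Monic ∧ IsCoprime u' v' ∧ u = g * u' ∧ v = g * v' := by
  classical
  obtain ⟨u', v', hu', hv', hunit⟩ := extract_gcd u v
  refine ⟨gcd u v, u', v', ?_, (gcd_isUnit_iff u' v').mp hunit, hu', hv'⟩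
  simpa only [normalize_gcd] using monic_normalize (gcd_ne_zero_of_left (b := v) hu)

theorem injOn_smul_of_monic_isCoprime :
    Set.InjOn (fun x : K[X] × (K[X] × K[X]) => x.1 • x.2)
      {x | x.1.Monic ∧ IsCoprime x.2.1 x.2.2} := by
  classical
  rintro ⟨g, u, v⟩ ⟨hg : g.Monic, huv⟩ ⟨g', u', v'⟩ ⟨hg' : g'.Monic, huv'⟩ h
  simp only [Prod.smul_mk, smul_eq_mul, Prod.mk.injEq] at h
  obtain ⟨hu, hv⟩ := h
  have hgg' : g = g' := by
    rw [← hg.gcd_mul_mul_of_isCoprime huv, hu, hv, hg'.gcd_mul_mul_of_isCoprime huv']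
  subst hgg'
  rw [mul_left_cancel₀ hg.ne_zero hu, mul_left_cancel₀ hg.ne_zero hv]

variable (K)

def monicsOfDegree (n : ℕ) : Set K[X] := {p | p.Monic ∧ p.natDegree = n}

def coprimeMonicPairs (a b : ℕ) : Set (K[X] × K[X]) :=
  {p | p.1.Monic ∧ p.2.Monic ∧ p.1.natDegree = a ∧ p.2.natDegree = b ∧ IsCoprime p.1 p.2}

theorem coprimeMonicPairs_subset_prod (a b : ℕ) :
    coprimeMonicPairs K a b ⊆ monicsOfDegree K a ×ˢ monicsOfDegree K b :=
  fun _ hp => ⟨⟨hp.1, hp.2.2.1⟩, hp.2.1, hp.2.2.2.1⟩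

theorem monicsOfDegree_prod_eq_image_smul (a b : ℕ) :
    monicsOfDegree K a ×ˢ monicsOfDegree K b =
      (fun x : K[X] × (K[X] × K[X]) => x.1 • x.2) ''
        ⋃ k ∈ Finset.range (min a b + 1),
          monicsOfDegree K k ×ˢ coprimeMonicPairs K (a - k) (b - k) := by
  ext ⟨u, v⟩
  constructor
  · rintro ⟨⟨hu, rfl⟩, hv, rfl⟩
    obtain ⟨g, u', v', hg, huv, rfl, rfl⟩ := exists_monic_mul_isCoprime hu.ne_zero v
    have hu' := hg.of_mul_monic_left hu
    have hv' := hg.of_mul_monic_left hv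
    rw [hg.natDegree_mul hu', hg.natDegree_mul hv']
    refine ⟨(g, u', v'), Set.mem_biUnion (x := g.natDegree) ?_ ?_, rfl⟩
    · simp only [Finset.coe_range, Set.mem_Iio]
      omega
    · exact ⟨⟨hg, rfl⟩, hu', hv', (Nat.add_sub_cancel_left ..).symm,
        (Nat.add_sub_cancel_left ..).symm, huv⟩
  · rintro ⟨⟨g, u', v'⟩, hx, h⟩
    simp only [Prod.smul_mk, smul_eq_mul, Prod.mk.injEq] at h
    obtain ⟨rfl, rfl⟩ := h
    simp only [Set.mem_iUnion, Finset.mem_range] at hx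
    obtain ⟨k, hk, ⟨hg, rfl⟩, hu', hv', hdu, hdv, -⟩ := hx
    refine ⟨⟨hg.mul hu', ?_⟩, hg.mul hv', ?_⟩
    · rw [hg.natDegree_mul hu']
      omega
    · rw [hg.natDegree_mul hv']
      omega

variable [Fintype K]

theorem ncard_monicsOfDegree (n : ℕ) : (monicsOfDegree K n).ncard = Fintype.card K ^ n := by
  rw [← Nat.card_coe_set_eq,
    Nat.card_congr (α := monicsOfDegree K n)
      ((monicEquivDegreeLT n).trans (degreeLTEquiv K n).toEquiv),
    Nat.card_fun, Nat.card_fin, Nat.card_eq_fintype_card]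

theorem finite_monicsOfDegree (n : ℕ) : (monicsOfDegree K n).Finite :=
  Set.finite_of_ncard_pos (by rw [ncard_monicsOfDegree]; exact pow_pos Fintype.card_pos n)

theorem finite_coprimeMonicPairs (a b : ℕ) : (coprimeMonicPairs K a b).Finite :=
  ((finite_monicsOfDegree K a).prod (finite_monicsOfDegree K b)).subset
    (coprimeMonicPairs_subset_prod K a b)

theorem sum_pow_mul_ncard_coprimeMonicPairs (a b : ℕ) :
    ∑ k ∈ Finset.range (min a b + 1),
        Fintype.card K ^ k * (coprimeMonicPairs K (a - k) (b - k)).ncard =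
      Fintype.card K ^ (a + b) := by
  have hinj : Set.InjOn (fun x : K[X] × (K[X] × K[X]) => x.1 • x.2)
      (⋃ k ∈ Finset.range (min a b + 1),
        monicsOfDegree K k ×ˢ coprimeMonicPairs K (a - k) (b - k)) :=
    injOn_smul_of_monic_isCoprime.mono <|
      Set.iUnion₂_subset fun _ _ _ hx => show _ ∧ _ from ⟨hx.1.1, hx.2.2.2.2.2⟩
  have hdisj : (Finset.range (min a b + 1) : Set ℕ).PairwiseDisjoint
      fun k => monicsOfDegree K k ×ˢ coprimeMonicPairs K (a - k) (b - k) :=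
    fun k _ l _ hkl => Set.disjoint_left.mpr fun _ hk hl => hkl (hk.1.2.symm.trans hl.1.2)
  calc ∑ k ∈ Finset.range (min a b + 1),
        Fintype.card K ^ k * (coprimeMonicPairs K (a - k) (b - k)).ncard
      = ∑ k ∈ Finset.range (min a b + 1),
          (monicsOfDegree K k ×ˢ coprimeMonicPairs K (a - k) (b - k)).ncard := by
        simp only [Set.ncard_prod, ncard_monicsOfDegree]
    _ = (⋃ k ∈ Finset.range (min a b + 1),
          monicsOfDegree K k ×ˢ coprimeMonicPairs K (a - k) (b - k)).ncard := by
        rw [← finsum_mem_coe_finset]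
        exact ((Finset.finite_toSet _).ncard_biUnion
          (fun k _ => (finite_monicsOfDegree K k).prod (finite_coprimeMonicPairs K _ _)) hdisj).symm
    _ = (monicsOfDegree K a ×ˢ monicsOfDegree K b).ncard := by
        rw [monicsOfDegree_prod_eq_image_smul, hinj.ncard_image]
    _ = Fintype.card K ^ (a + b) := by
        rw [Set.ncard_prod, ncard_monicsOfDegree, ncard_monicsOfDegree, pow_add]

theorem ncard_coprimeMonicPairs_of_eq_zero {a b : ℕ} (h : a = 0 ∨ b = 0) :
    (coprimeMonicPairs K a b).ncard = Fintype.card K ^ (a + b) := by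
  have hmin : min a b = 0 := by omega
  simpa [hmin] using sum_pow_mul_ncard_coprimeMonicPairs K a b

theorem ncard_coprimeMonicPairs_of_pos {a b : ℕ} (ha : 0 < a) (hb : 0 < b) :
    (coprimeMonicPairs K a b).ncard =
      Fintype.card K ^ (a + b) - Fintype.card K ^ (a + b - 1) := by
  obtain ⟨a, rfl⟩ : ∃ a', a = a' + 1 := ⟨a - 1, by omega⟩
  obtain ⟨b, rfl⟩ : ∃ b', b = b' + 1 := ⟨b - 1, by omega⟩
  have hshift : ∑ k ∈ Finset.range (min a b + 1), Fintype.card K ^ (k + 1) *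
      (coprimeMonicPairs K (a + 1 - (k + 1)) (b + 1 - (k + 1))).ncard =
        Fintype.card K ^ (a + b + 1) := by
    simp_rw [Nat.add_sub_add_right, pow_succ, mul_right_comm _ (Fintype.card K),
      ← Finset.sum_mul, sum_pow_mul_ncard_coprimeMonicPairs]
  have h := sum_pow_mul_ncard_coprimeMonicPairs K (a + 1) (b + 1)
  rw [Nat.add_min_add_right, Finset.sum_range_succ', hshift, pow_zero, one_mul, Nat.sub_zero,
    Nat.sub_zero] at h
  rw [show a + 1 + (b + 1) - 1 = a + b + 1 by omega]
  omega

end Polynomial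

/-- Over a finite field with `q` elements, the number of pairs of coprime monic polynomials
of degrees `d₁, d₂` equals `q^(d₁+d₂) − q^(d₁+d₂−1)` if `d₁, d₂ > 0`, and `q^(d₁+d₂)`
if `d₁ = 0` or `d₂ = 0`. -/
theorem count_coprime_monic_pairs (F : Type*) [Field F] [Fintype F] (q : ℕ)
    (hq : Fintype.card F = q) (d1 d2 : ℕ) :
    (0 < d1 → 0 < d2 →
      Set.ncard {p : F[X] × F[X] | p.1.Monic ∧ p.2.Monic ∧ p.1.natDegree = d1 ∧
          p.2.natDegree = d2 ∧ IsCoprime p.1 p.2}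
        = q ^ (d1 + d2) - q ^ (d1 + d2 - 1)) ∧
    (d1 = 0 ∨ d2 = 0 →
      Set.ncard {p : F[X] × F[X] | p.1.Monic ∧ p.2.Monic ∧ p.1.natDegree = d1 ∧
          p.2.natDegree = d2 ∧ IsCoprime p.1 p.2}
        = q ^ (d1 + d2)) := by
  subst hq
  exact ⟨ncard_coprimeMonicPairs_of_pos F, ncard_coprimeMonicPairs_of_eq_zero F⟩
end

section
/- Let F_q be a finite field with q elements, let m ≥ 2, and let d1, …, dm be positive natural numbers. The number of m-tuples (f1, …, fm) of monic polynomials over F_q with deg fi = di for all i and with no common non-unit factor equals q^{d1+⋯+dm} − q^{d1+⋯+dm−(m−1)}. -/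
/-!
Write a monic tuple `f` as `gcd f` times the coprime tuple of cofactors `fᵢ / gcd f`; then `f` is
determined by its gcd and its cofactors, and any monic polynomial can be put in place of the gcd.
A monic `g` of degree `k + 1` is the same datum as its constant term together with the monic
polynomial `g.divX` of degree `k`. Replacing the gcd `g` by `g.divX` therefore identifies the
tuples with a non-constant common factor with `F × {monic tuples of degrees dᵢ - 1}`, a set of size
`q · q^(∑ dᵢ - m)`; the coprime tuples are the complement in a set of size `q^(∑ dᵢ)`.
-/

open Polynomial

theorem Finset.forall_dvd_isUnit_iff_isUnit_gcd {α ι : Type*} [CommMonoidWithZero α]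
    [NormalizedGCDMonoid α] [Fintype ι] (f : ι → α) :
    (∀ p : α, (∀ i, p ∣ f i) → IsUnit p) ↔ IsUnit (Finset.univ.gcd f) :=
  ⟨fun h => h _ fun i => Finset.gcd_dvd (Finset.mem_univ i),
    fun h _ hp => isUnit_of_dvd_unit (Finset.dvd_gcd fun i _ => hp i) h⟩

namespace Polynomial

section Semiring

variable {R : Type*} [Semiring R]

theorem Monic.divX {p : R[X]} (hp : p.Monic) (h : p.natDegree ≠ 0) : p.divX.Monic := by
  unfold Monic Polynomial.leadingCoeff
  rw [natDegree_divX_eq_natDegree_tsub_one, coeff_divX, Nat.sub_add_cancel (by omega)]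
  exact hp

theorem divX_mul_X_add_C (p : R[X]) (c : R) : (p * X + C c).divX = p := by
  ext n; simp [coeff_divX]

variable [Nontrivial R]

theorem natDegree_mul_X_add_C {p : R[X]} (hp : p ≠ 0) (c : R) :
    (p * X + C c).natDegree = p.natDegree + 1 := by
  rw [natDegree_add_C, natDegree_mul_X hp]

theorem Monic.mul_X_add_C {p : R[X]} (hp : p.Monic) (c : R) : (p * X + C c).Monic :=
  (hp.mul monic_X).add_of_left <| degree_C_le.trans_lt <| by
    rw [← natDegree_pos_iff_degree_pos, Polynomial.natDegree_mul_X hp.ne_zero]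
    omega

end Semiring

variable {F : Type*} [Field F]

variable {ι : Type*} [Fintype ι]

variable (F) in
def monicTuples (d : ι → ℕ) : Set (ι → F[X]) :=
  {f | ∀ i, (f i).Monic ∧ (f i).natDegree = d i}

section Card

variable [Fintype F]

theorem card_monic_natDegree_eq (n : ℕ) :
    Nat.card {p : F[X] // p.Monic ∧ p.natDegree = n} = Fintype.card F ^ n := by
  rw [Nat.card_congr ((monicEquivDegreeLT n).trans (degreeLTEquiv F n).toEquiv)]
  simp

theorem ncard_monicTuples (d : ι → ℕ) :
    (monicTuples F d).ncard = Fintype.card F ^ ∑ i, d i := by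
  have e : monicTuples F d ≃ ∀ i, {p : F[X] // p.Monic ∧ p.natDegree = d i} :=
    Equiv.subtypePiEquivPi (p := fun i (p : F[X]) => p.Monic ∧ p.natDegree = d i)
  rw [← Nat.card_coe_set_eq, Nat.card_congr e, Nat.card_pi]
  simp only [card_monic_natDegree_eq, Finset.prod_pow_eq_pow_sum]

theorem finite_monicTuples (d : ι → ℕ) : (monicTuples F d).Finite :=
  Set.finite_of_ncard_pos <| by
    rw [ncard_monicTuples]
    exact pow_pos Fintype.card_pos _

end Card

section Gcd

variable [DecidableEq F]

noncomputable def divGcd (f : ι → F[X]) (i : ι) : F[X] := f i / Finset.univ.gcd f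

noncomputable def withGcd (a : F[X]) (f : ι → F[X]) (i : ι) : F[X] := a * divGcd f i

theorem gcd_mul_divGcd (f : ι → F[X]) (i : ι) : Finset.univ.gcd f * divGcd f i = f i := by
  by_cases h0 : Finset.univ.gcd f = 0
  · rw [h0, zero_mul, (Finset.gcd_eq_zero_iff.mp h0) i (Finset.mem_univ i)]
  · exact EuclideanDomain.mul_div_cancel' h0 (Finset.gcd_dvd (Finset.mem_univ i))

theorem withGcd_gcd_self (f : ι → F[X]) : withGcd (Finset.univ.gcd f) f = f :=
  _root_.funext fun i => gcd_mul_divGcd f i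

theorem gcd_divGcd {f : ι → F[X]} (h0 : Finset.univ.gcd f ≠ 0) :
    Finset.univ.gcd (divGcd f) = 1 :=
  Finset.extract_gcd' f _ (by simpa [Finset.gcd_eq_zero_iff] using h0)
    fun i _ => (gcd_mul_divGcd f i).symm

theorem gcd_withGcd {a : F[X]} (ha : a.Monic) {f : ι → F[X]} (h0 : Finset.univ.gcd f ≠ 0) :
    Finset.univ.gcd (withGcd a f) = a := by
  change Finset.univ.gcd (fun i => a * divGcd f i) = a
  rw [Finset.gcd_mul_left, gcd_divGcd h0, mul_one, ha.normalize_eq_self]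

theorem withGcd_withGcd (b : F[X]) {a : F[X]} (ha : a.Monic) {f : ι → F[X]}
    (h0 : Finset.univ.gcd f ≠ 0) : withGcd b (withGcd a f) = withGcd b f := by
  ext1 i
  change b * (a * divGcd f i / Finset.univ.gcd (withGcd a f)) = b * divGcd f i
  rw [gcd_withGcd ha h0, mul_div_cancel_left₀ _ ha.ne_zero]

theorem gcd_ne_zero_of_mem_monicTuples [Nonempty ι] {d : ι → ℕ} {f : ι → F[X]}
    (hf : f ∈ monicTuples F d) : Finset.univ.gcd f ≠ 0 := fun h =>
  (hf (Classical.arbitrary ι)).1.ne_zero (Finset.gcd_eq_zero_iff.mp h _ (Finset.mem_univ _))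

theorem gcd_monic_of_mem_monicTuples [Nonempty ι] {d : ι → ℕ} {f : ι → F[X]}
    (hf : f ∈ monicTuples F d) : (Finset.univ.gcd f).Monic :=
  Finset.normalize_gcd (f := f) ▸ monic_normalize (gcd_ne_zero_of_mem_monicTuples hf)

theorem withGcd_mem_monicTuples [Nonempty ι] {d d' : ι → ℕ} {f : ι → F[X]}
    (hf : f ∈ monicTuples F d) {a : F[X]} (ha : a.Monic)
    (hd' : ∀ i, a.natDegree + d i - (Finset.univ.gcd f).natDegree = d' i) :
    withGcd a f ∈ monicTuples F d' := by
  intro i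
  have hg := gcd_monic_of_mem_monicTuples hf
  have hfi := gcd_mul_divGcd f i
  have hq : (divGcd f i).Monic := hg.of_mul_monic_left (hfi ▸ (hf i).1)
  have hdeg := natDegree_mul hg.ne_zero hq.ne_zero
  rw [hfi, (hf i).2] at hdeg
  refine ⟨ha.mul hq, ?_⟩
  rw [withGcd, natDegree_mul ha.ne_zero hq.ne_zero, ← hd']
  omega

variable (F) in
def nonCoprime (d : ι → ℕ) : Set (ι → F[X]) :=
  {f ∈ monicTuples F d | ¬IsUnit (Finset.univ.gcd f)}

variable [Nonempty ι] {d : ι → ℕ}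

theorem natDegree_gcd_ne_zero_of_mem_nonCoprime {f : ι → F[X]} (hf : f ∈ nonCoprime F d) :
    (Finset.univ.gcd f).natDegree ≠ 0 := fun h =>
  hf.2 ((gcd_monic_of_mem_monicTuples hf.1).natDegree_eq_zero.mp h ▸ isUnit_one)

theorem withGcd_divX_gcd_mem {f : ι → F[X]} (hf : f ∈ nonCoprime F d) :
    withGcd (Finset.univ.gcd f).divX f ∈ monicTuples F (fun i => d i - 1) := by
  have hg1 := natDegree_gcd_ne_zero_of_mem_nonCoprime hf
  refine withGcd_mem_monicTuples hf.1
    ((gcd_monic_of_mem_monicTuples hf.1).divX hg1) fun i => ?_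
  rw [natDegree_divX_eq_natDegree_tsub_one]
  omega

theorem withGcd_mul_X_add_C_mem (hd : ∀ i, 0 < d i) {f : ι → F[X]}
    (hf : f ∈ monicTuples F (fun i => d i - 1)) (c : F) :
    withGcd (Finset.univ.gcd f * X + C c) f ∈ nonCoprime F d := by
  have hg := gcd_monic_of_mem_monicTuples hf
  have hdeg := natDegree_mul_X_add_C hg.ne_zero c
  refine ⟨withGcd_mem_monicTuples hf (hg.mul_X_add_C c) fun i => ?_, fun hu => ?_⟩
  · have := hd i
    omega
  · rw [gcd_withGcd (hg.mul_X_add_C c) (gcd_ne_zero_of_mem_monicTuples hf)] at hu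
    have := natDegree_eq_zero_of_isUnit hu
    omega

variable (F) in
noncomputable def nonCoprimeEquiv (hd : ∀ i, 0 < d i) :
    nonCoprime F d ≃ F × monicTuples F (fun i => d i - 1) where
  toFun f := ((Finset.univ.gcd f.1).coeff 0, ⟨_, withGcd_divX_gcd_mem f.2⟩)
  invFun p := ⟨_, withGcd_mul_X_add_C_mem hd p.2.2 p.1⟩
  left_inv := by
    rintro ⟨f, hf⟩
    have h0 := gcd_ne_zero_of_mem_monicTuples hf.1
    have hdX := (gcd_monic_of_mem_monicTuples hf.1).divX
      (natDegree_gcd_ne_zero_of_mem_nonCoprime hf)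
    ext1
    simp only [gcd_withGcd hdX h0, divX_mul_X_add, withGcd_withGcd _ hdX h0, withGcd_gcd_self]
  right_inv := by
    rintro ⟨c, f, hf⟩
    have h0 := gcd_ne_zero_of_mem_monicTuples hf
    have ha := (gcd_monic_of_mem_monicTuples hf).mul_X_add_C c
    ext1
    · simp [gcd_withGcd ha h0]
    · ext1
      simp only [gcd_withGcd ha h0, divX_mul_X_add_C, withGcd_withGcd _ ha h0, withGcd_gcd_self]

variable [Fintype F]

theorem ncard_nonCoprime (hd : ∀ i, 0 < d i) :
    (nonCoprime F d).ncard = Fintype.card F ^ (∑ i, d i - (Fintype.card ι - 1)) := by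
  rw [← Nat.card_coe_set_eq, Nat.card_congr (nonCoprimeEquiv F hd), Nat.card_prod,
    Nat.card_eq_fintype_card, Nat.card_coe_set_eq, ncard_monicTuples, ← pow_succ']
  have hsum : ∑ i, (d i - 1) = ∑ i, d i - Fintype.card ι := by
    rw [Finset.sum_tsub_distrib _ fun i _ => hd i]
    simp
  have hle : Fintype.card ι ≤ ∑ i, d i := by
    simpa using Finset.card_nsmul_le_sum Finset.univ d 1 fun i _ => hd i
  have hpos : 0 < Fintype.card ι := Fintype.card_pos
  congr 1
  omega

theorem ncard_monicTuples_isUnit_gcd (hd : ∀ i, 0 < d i) :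
    {f ∈ monicTuples F d | IsUnit (Finset.univ.gcd f)}.ncard =
      Fintype.card F ^ (∑ i, d i) - Fintype.card F ^ (∑ i, d i - (Fintype.card ι - 1)) := by
  have hdiff : {f ∈ monicTuples F d | IsUnit (Finset.univ.gcd f)} =
      monicTuples F d \ nonCoprime F d := by
    ext f
    simp only [nonCoprime, Set.mem_ofPred_eq, Set.mem_sdiff, not_and, not_not]
    tauto
  rw [hdiff, Set.ncard_sdiff' (fun _ hf => hf.1) (finite_monicTuples d), ncard_monicTuples,
    ncard_nonCoprime hd]

end Gcd

end Polynomial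

/-- Over a finite field with `q` elements, for `m ≥ 2` and positive degrees `d₁, …, d_m`,
the number of `m`-tuples of monic polynomials of degrees `dᵢ` with no common non-unit factor
equals `q^(d₁+⋯+d_m) − q^(d₁+⋯+d_m−(m−1))`. -/
theorem count_coprime_monic_tuples (F : Type*) [Field F] [Fintype F] (q : ℕ)
    (hq : Fintype.card F = q) (m : ℕ) (hm : 2 ≤ m) (d : Fin m → ℕ) (hd : ∀ i, 0 < d i) :
    Set.ncard {h : Fin m → F[X] | (∀ i, (h i).Monic ∧ (h i).natDegree = d i) ∧
        (∀ p : F[X], (∀ i, p ∣ h i) → IsUnit p)}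
      = q ^ (∑ i, d i) - q ^ (∑ i, d i - (m - 1)) := by
  classical
  have : Nonempty (Fin m) := ⟨⟨0, by omega⟩⟩
  have hcount := ncard_monicTuples_isUnit_gcd (F := F) hd
  rw [Fintype.card_fin, hq] at hcount
  simp_rw [Finset.forall_dvd_isUnit_iff_isUnit_gcd]
  exact hcount
end

section
/- Let F_q be a finite field with q elements and let d1, d2, k be natural numbers with k ≤ d1 and k ≤ d2. The number of pairs (u, v) of monic polynomials over F_q with deg u = d1, deg v = d2, and whose greatest common divisor has degree at least k equals q^{d1+d2−k}. -/
/-!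
Fix `m` and `k`, and let `N d` count the pairs `(u, v)` of monic polynomials of degrees `d` and
`m` with `deg (gcd u v) ≥ k`. For `m ≤ d`, Euclidean division `u = r + v * w` is a bijection onto
the triples with `w` monic of degree `d - m` and `deg r < m`, and it keeps the gcd, so
`N d = q ^ (d - m) * A m`, where `A n` counts the pairs `(r, v)` with `deg r < n`. Splitting off
the `r` of degree exactly `n` and scaling them to be monic gives `A (n + 1) = A n + (q - 1) * N n`.
Since `A 0 = q ^ m`, `N n = 0` for `n < k`, and strong induction on `d + m` gives
`N n = q ^ (n + m - k)` for `k ≤ n < m`, this telescopes to `A m = q ^ (2 * m - k)`, whence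
`N d = q ^ (d + m - k)`; the case `d < m` follows by symmetry.
-/

open Polynomial

namespace Polynomial

section Semiring

variable {R : Type*} [Semiring R]

variable (R) in
def monicOfNatDegree (n : ℕ) : Set R[X] := {p | p.Monic ∧ p.natDegree = n}

theorem setOf_degree_lt_add_one (n : ℕ) :
    {p : R[X] | p.degree < ↑(n + 1)} =
      {p : R[X] | p.degree < n} ∪ {p : R[X] | p.degree = n} := by
  ext p
  rw [Set.mem_union, Set.mem_ofPred_eq, Set.mem_ofPred_eq, Set.mem_ofPred_eq, ← le_iff_lt_or_eq,
    ← mem_degreeLT, ← mem_degreeLE, degreeLT_succ_eq_degreeLE]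

theorem finite_setOf_degree_lt [Finite R] (n : ℕ) : {p : R[X] | p.degree < n}.Finite := by
  have : Finite (degreeLT R n) := .of_equiv _ (degreeLTEquiv R n).toEquiv.symm
  exact (degreeLT R n : Set R[X]).toFinite.subset fun p hp => mem_degreeLT.mpr hp

theorem ncard_monicOfNatDegree [Nontrivial R] [Fintype R] (n : ℕ) :
    (monicOfNatDegree R n).ncard = Fintype.card R ^ n := by
  rw [← Nat.card_coe_set_eq]
  exact (Nat.card_congr ((monicEquivDegreeLT n).trans (degreeLTEquiv R n).toEquiv)).trans
    (by simp [Nat.card_eq_fintype_card])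

theorem finite_monicOfNatDegree [Finite R] (n : ℕ) : (monicOfNatDegree R n).Finite :=
  (finite_setOf_degree_lt (n + 1)).subset fun _ ⟨_, hpn⟩ =>
    degree_le_natDegree.trans_lt (by rw [hpn]; exact_mod_cast n.lt_succ_self)

end Semiring

section Field

variable {F : Type*} [Field F] [DecidableEq F]

theorem gcd_C_mul_left_of_ne_zero {c : F} (hc : c ≠ 0) (r v : F[X]) :
    gcd (C c * r) v = gcd r v :=
  (associated_unit_mul_left r (C c) (isUnit_C.mpr hc.isUnit)).gcd_eq_left v

/-- `commonFactorPairs (monicOfNatDegree F d₁) d₂ k` is the paper's `R_{1,k}^{(d₁,d₂)}`. -/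
def commonFactorPairs (s : Set F[X]) (m k : ℕ) : Set (F[X] × F[X]) :=
  {p | p.1 ∈ s ∧ p.2.Monic ∧ p.2.natDegree = m ∧ k ≤ (gcd p.1 p.2).natDegree}

theorem commonFactorPairs_monicOfNatDegree_comm (d m k : ℕ) :
    commonFactorPairs (monicOfNatDegree F m) d k =
      Prod.swap ⁻¹' commonFactorPairs (monicOfNatDegree F d) m k := by
  ext ⟨u, v⟩
  simp only [commonFactorPairs, monicOfNatDegree, Set.mem_preimage, Prod.swap_prod_mk,
    Set.mem_ofPred_eq, gcd_comm v u]
  tauto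

theorem commonFactorPairs_monicOfNatDegree_eq_empty {d k : ℕ} (h : d < k) (m : ℕ) :
    commonFactorPairs (monicOfNatDegree F d) m k = ∅ := by
  refine Set.eq_empty_of_forall_notMem ?_
  rintro ⟨u, v⟩ ⟨⟨hu, hud⟩, -, -, hk⟩
  dsimp only at hud hk
  have := natDegree_le_of_dvd (gcd_dvd_left u v) hu.ne_zero
  omega

theorem commonFactorPairs_degree_lt_zero {m k : ℕ} (hk : k ≤ m) :
    commonFactorPairs {r : F[X] | r.degree < ↑(0 : ℕ)} m k = {0} ×ˢ monicOfNatDegree F m := by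
  ext ⟨r, v⟩
  simp only [commonFactorPairs, monicOfNatDegree, Set.mem_ofPred_eq, Set.mem_prod,
    Set.mem_singleton_iff, Nat.cast_zero, Nat.WithBot.lt_zero_iff, degree_eq_bot]
  constructor
  · exact fun ⟨hr, hv, hvd, _⟩ => ⟨hr, hv, hvd⟩
  · rintro ⟨rfl, hv, hvd⟩
    exact ⟨rfl, hv, hvd, by rwa [gcd_zero_left, hv.normalize_eq_self, hvd]⟩

theorem finite_commonFactorPairs [Finite F] {s : Set F[X]} (hs : s.Finite) (m k : ℕ) :
    (commonFactorPairs s m k).Finite :=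
  (hs.prod (finite_monicOfNatDegree m)).subset fun _ hp => ⟨hp.1, hp.2.1, hp.2.2.1⟩

theorem ncard_commonFactorPairs_union [Finite F] {s t : Set F[X]} (hst : Disjoint s t)
    (hfin : (s ∪ t).Finite) (m k : ℕ) :
    (commonFactorPairs (s ∪ t) m k).ncard =
      (commonFactorPairs s m k).ncard + (commonFactorPairs t m k).ncard := by
  have hunion : commonFactorPairs (s ∪ t) m k =
      commonFactorPairs s m k ∪ commonFactorPairs t m k := by
    ext p
    simp only [commonFactorPairs, Set.mem_union, Set.mem_ofPred_eq]
    tauto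
  rw [hunion, Set.ncard_union_eq
    (Set.disjoint_left.mpr fun p hps hpt => Set.disjoint_left.mp hst hps.1 hpt.1)
    (finite_commonFactorPairs (hfin.subset Set.subset_union_left) m k)
    (finite_commonFactorPairs (hfin.subset Set.subset_union_right) m k)]

variable [Fintype F]

theorem ncard_commonFactorPairs_degree_eq (n m k : ℕ) :
    (commonFactorPairs {r : F[X] | r.degree = n} m k).ncard =
      (Fintype.card F - 1) * (commonFactorPairs (monicOfNatDegree F n) m k).ncard := by
  have hunits : {c : F | c ≠ 0}.ncard = Fintype.card F - 1 := by
    rw [← Nat.card_coe_set_eq]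
    exact (Nat.card_congr unitsEquivNeZero).symm.trans
      (by rw [Nat.card_eq_fintype_card, Fintype.card_units])
  rw [← hunits, ← Set.ncard_prod]
  symm
  refine Set.BijOn.ncard_eq (f := fun x : F × F[X] × F[X] => (C x.1 * x.2.1, x.2.2))
    (Set.InvOn.bijOn (f' := fun p => (p.1.leadingCoeff, C p.1.leadingCoeff⁻¹ * p.1, p.2))
      ⟨?_, ?_⟩ ?_ ?_)
  · rintro ⟨c, r, v⟩ ⟨hc, ⟨hr, -⟩, -⟩
    dsimp only
    rw [leadingCoeff_mul, leadingCoeff_C, hr.leadingCoeff, mul_one, ← mul_assoc, ← C_mul,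
      inv_mul_cancel₀ hc, C_1, one_mul]
  · rintro ⟨r, v⟩ ⟨hr, -⟩
    have hr0 : r.leadingCoeff ≠ 0 := leadingCoeff_ne_zero.mpr (ne_zero_of_coe_le_degree hr.ge)
    dsimp only
    rw [← mul_assoc, ← C_mul, mul_inv_cancel₀ hr0, C_1, one_mul]
  · rintro ⟨c, r, v⟩ ⟨hc, ⟨hr, hrd⟩, hv, hvd, hk⟩
    refine ⟨?_, hv, hvd, ?_⟩
    · show (C c * r).degree = n
      rw [degree_C_mul hc, degree_eq_natDegree hr.ne_zero, hrd]
    · rwa [gcd_C_mul_left_of_ne_zero hc]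
  · rintro ⟨r, v⟩ ⟨hr, hv, hvd, hk⟩
    have hr0 : r.leadingCoeff ≠ 0 := leadingCoeff_ne_zero.mpr (ne_zero_of_coe_le_degree hr.ge)
    refine ⟨hr0, ⟨monic_C_mul_of_mul_leadingCoeff_eq_one (inv_mul_cancel₀ hr0), ?_⟩, hv, hvd, ?_⟩
    · rw [natDegree_C_mul (inv_ne_zero hr0), natDegree_eq_of_degree_eq_some hr]
    · rwa [gcd_C_mul_left_of_ne_zero (inv_ne_zero hr0)]

theorem ncard_commonFactorPairs_monicOfNatDegree_of_le {d m : ℕ} (k : ℕ) (h : m ≤ d) :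
    (commonFactorPairs (monicOfNatDegree F d) m k).ncard =
      Fintype.card F ^ (d - m) * (commonFactorPairs {r : F[X] | r.degree < m} m k).ncard := by
  rw [← ncard_monicOfNatDegree, ← Set.ncard_prod]
  symm
  refine Set.BijOn.ncard_eq (f := fun x : F[X] × F[X] × F[X] => (x.2.1 + x.2.2 * x.1, x.2.2))
    (Set.InvOn.bijOn (f' := fun p => (p.1 /ₘ p.2, p.1 %ₘ p.2, p.2)) ⟨?_, ?_⟩ ?_ ?_)
  · rintro ⟨w, r, v⟩ ⟨-, hr, hv, hvd, -⟩
    obtain ⟨hdiv, hmod⟩ := div_modByMonic_unique w r hv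
      ⟨rfl, by rwa [degree_eq_natDegree hv.ne_zero, hvd]⟩
    simp [hdiv, hmod]
  · rintro ⟨u, v⟩ -
    simp [modByMonic_add_div]
  · rintro ⟨w, r, v⟩ ⟨⟨hw, hwd⟩, hr, hv, hvd, hk⟩
    have hvw : (v * w).Monic := hv.mul hw
    have hvwd : (v * w).natDegree = d := by
      rw [hv.natDegree_mul hw, hvd, hwd]
      omega
    have hlt : r.degree < (v * w).degree := by
      rw [degree_eq_natDegree hvw.ne_zero, hvwd]
      exact hr.trans_le (by exact_mod_cast h)
    refine ⟨⟨hvw.add_of_right hlt, by rw [natDegree_add_eq_right_of_degree_lt hlt, hvwd]⟩,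
      hv, hvd, ?_⟩
    rwa [gcd_eq_of_dvd_sub_left (by rw [add_sub_cancel_left]; exact dvd_mul_right v w)]
  · rintro ⟨u, v⟩ ⟨⟨hu, hud⟩, hv, hvd, hk⟩
    have hle : v.degree ≤ u.degree := by
      rw [degree_eq_natDegree hv.ne_zero, degree_eq_natDegree hu.ne_zero, hvd, hud]
      exact_mod_cast h
    refine ⟨⟨?_, by rw [natDegree_divByMonic u hv, hud, hvd]⟩, ?_, hv, hvd, ?_⟩
    · rw [Monic, leadingCoeff_divByMonic_of_monic hv hle]
      exact hu
    · simpa only [Set.mem_ofPred_eq, degree_eq_natDegree hv.ne_zero, hvd]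
        using degree_modByMonic_lt u hv
    · rwa [gcd_eq_of_dvd_sub_left (dvd_modByMonic_sub u v)]

/-- For `n ≤ k` only `r = 0` qualifies, which the truncated `n - k = 0` accounts for. -/
theorem ncard_commonFactorPairs_degree_lt {m k : ℕ} (hk : k ≤ m) (n : ℕ)
    (ih : ∀ e < n, k ≤ e →
      (commonFactorPairs (monicOfNatDegree F e) m k).ncard = Fintype.card F ^ (e + m - k)) :
    (commonFactorPairs {r : F[X] | r.degree < n} m k).ncard = Fintype.card F ^ (m + (n - k)) := by
  induction n with
  | zero =>
    rw [commonFactorPairs_degree_lt_zero hk, Set.ncard_prod, Set.ncard_singleton,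
      ncard_monicOfNatDegree]
    simp
  | succ n ihn =>
    rw [setOf_degree_lt_add_one,
      ncard_commonFactorPairs_union (Set.disjoint_left.mpr fun r hlt heq => hlt.ne heq)
        (setOf_degree_lt_add_one (R := F) n ▸ finite_setOf_degree_lt (n + 1)),
      ihn fun e he => ih e (by omega), ncard_commonFactorPairs_degree_eq]
    rcases lt_or_ge n k with hnk | hkn
    · rw [commonFactorPairs_monicOfNatDegree_eq_empty hnk, Set.ncard_empty, mul_zero, add_zero]
      congr 2
      omega
    · rw [ih n (by omega) hkn, show n + m - k = m + (n - k) by omega,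
        show n + 1 - k = n - k + 1 by omega, ← add_assoc, pow_succ, Nat.sub_one_mul,
        Nat.add_sub_cancel' (Nat.le_mul_of_pos_left _ Fintype.card_pos), mul_comm]

theorem ncard_commonFactorPairs_monicOfNatDegree {d m k : ℕ} (hkd : k ≤ d) (hkm : k ≤ m) :
    (commonFactorPairs (monicOfNatDegree F d) m k).ncard = Fintype.card F ^ (d + m - k) := by
  rcases le_total m d with h | h
  · rw [ncard_commonFactorPairs_monicOfNatDegree_of_le k h,
      ncard_commonFactorPairs_degree_lt hkm m fun e _ hke =>
        ncard_commonFactorPairs_monicOfNatDegree hke hkm, ← pow_add]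
    congr 1
    omega
  · rw [commonFactorPairs_monicOfNatDegree_comm,
      Set.ncard_preimage_of_injective_subset_range Prod.swap_injective
        (Prod.swap_surjective.range_eq ▸ Set.subset_univ _),
      ncard_commonFactorPairs_monicOfNatDegree_of_le k h,
      ncard_commonFactorPairs_degree_lt hkd d fun e _ hke =>
        ncard_commonFactorPairs_monicOfNatDegree hke hkd, ← pow_add]
    congr 1
    omega
termination_by d + m

end Field

end Polynomial

/-- Over a finite field with `q` elements, for `k ≤ d₁` and `k ≤ d₂`, the number of pairs of
monic polynomials of degrees `d₁, d₂` whose gcd has degree at least `k` equals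
`q^(d₁+d₂−k)`. -/
theorem count_gcd_deg_ge (F : Type*) [Field F] [Fintype F] [DecidableEq F] (q : ℕ)
    (hq : Fintype.card F = q) (d1 d2 k : ℕ) (hk1 : k ≤ d1) (hk2 : k ≤ d2) :
    Set.ncard {p : F[X] × F[X] | p.1.Monic ∧ p.2.Monic ∧ p.1.natDegree = d1 ∧
        p.2.natDegree = d2 ∧ k ≤ (gcd p.1 p.2).natDegree}
      = q ^ (d1 + d2 - k) := by
  have hset : {p : F[X] × F[X] | p.1.Monic ∧ p.2.Monic ∧ p.1.natDegree = d1 ∧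
      p.2.natDegree = d2 ∧ k ≤ (gcd p.1 p.2).natDegree} =
      commonFactorPairs (monicOfNatDegree F d1) d2 k := by
    ext p
    simp only [commonFactorPairs, monicOfNatDegree, Set.mem_ofPred_eq]
    tauto
  rw [hset, ncard_commonFactorPairs_monicOfNatDegree hk1 hk2, hq]
end

section
/- Let F_q be a finite field with q elements and let d1, d2, k be natural numbers with k < d1 and k < d2. The number of pairs (u, v) of monic polynomials over F_q with deg u = d1, deg v = d2, and whose greatest common divisor has degree exactly k equals q^{d1+d2−k} − q^{d1+d2−k−1}. -/
/-!
Write `N(a, b, k)` for the number of pairs of monic polynomials of degrees `a, b` whose gcd has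
degree `k`. Factoring out the (monic) gcd shows `N(a + j, b + j, j) = q ^ j * N(a, b, 0)`, hence
`N(a + 1, b + 1, j + 1) = q * N(a, b, j)`. Sorting all `q ^ (a + b)` pairs by the degree of their gcd
gives `∑ⱼ N(a, b, j) = q ^ (a + b)`; splitting off `j = 0` and using the recursion on the remaining
terms yields `N(a + 1, b + 1, 0) + q * q ^ (a + b) = q ^ (a + b + 2)`, and the first identity with
`j = k` finishes the count.
-/

open Polynomial

section Monics

variable (R : Type*) [Semiring R]

def monicsOfNatDegree (n : ℕ) : Set R[X] := {p | p.Monic ∧ p.natDegree = n}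

variable [Nontrivial R]

noncomputable def monicsOfNatDegreeEquiv (n : ℕ) : monicsOfNatDegree R n ≃ (Fin n → R) :=
  (monicEquivDegreeLT n).trans (degreeLTEquiv R n).toEquiv

variable [Fintype R]

theorem finite_monicsOfNatDegree (n : ℕ) : (monicsOfNatDegree R n).Finite :=
  Set.finite_coe_iff.mp <| .of_equiv _ (monicsOfNatDegreeEquiv R n).symm

theorem ncard_monicsOfNatDegree (n : ℕ) :
    (monicsOfNatDegree R n).ncard = Fintype.card R ^ n := by
  rw [← Nat.card_coe_set_eq, Nat.card_congr (monicsOfNatDegreeEquiv R n)]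
  simp

end Monics

section Gcd

variable {F : Type*} [Field F] [DecidableEq F]

theorem monic_gcd_of_ne_zero_left {p q : F[X]} (hp : p ≠ 0) : (gcd p q).Monic := by
  rw [← normalize_gcd]
  exact monic_normalize (gcd_ne_zero_of_left hp)

theorem gcd_eq_one_of_natDegree_eq_zero {p q : F[X]} (hp : p ≠ 0)
    (h : (gcd p q).natDegree = 0) : gcd p q = 1 :=
  (monic_gcd_of_ne_zero_left hp).natDegree_eq_zero.mp h

theorem Polynomial.Monic.gcd_mul_left {g : F[X]} (hg : g.Monic) (u v : F[X]) :
    gcd (g * u) (g * v) = g * gcd u v := by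
  rw [_root_.gcd_mul_left, hg.normalize_eq_self]

theorem Polynomial.Monic.gcd_mul_eq_self {g u v : F[X]} (hg : g.Monic) (hu : u ≠ 0)
    (huv : (gcd u v).natDegree = 0) : gcd (g * u) (g * v) = g := by
  rw [hg.gcd_mul_left, gcd_eq_one_of_natDegree_eq_zero hu huv, mul_one]

end Gcd

section Count

variable (F : Type*) [Field F] [DecidableEq F]

def monicPairsWithGcdDegree (a b k : ℕ) : Set (F[X] × F[X]) :=
  {p | p.1.Monic ∧ p.2.Monic ∧ p.1.natDegree = a ∧ p.2.natDegree = b ∧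
    (gcd p.1 p.2).natDegree = k}

variable {F}

theorem le_of_mem_monicPairsWithGcdDegree {a b k : ℕ} {p : F[X] × F[X]}
    (hp : p ∈ monicPairsWithGcdDegree F a b k) : k ≤ a ∧ k ≤ b := by
  obtain ⟨h1, h2, rfl, rfl, rfl⟩ := hp
  exact ⟨natDegree_le_of_dvd (gcd_dvd_left _ _) h1.ne_zero,
    natDegree_le_of_dvd (gcd_dvd_right _ _) h2.ne_zero⟩

theorem monicPairsWithGcdDegree_eq_empty {a b k : ℕ} (h : a < k ∨ b < k) :
    monicPairsWithGcdDegree F a b k = ∅ :=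
  Set.eq_empty_of_forall_notMem fun _ hp ↦ by
    have := le_of_mem_monicPairsWithGcdDegree hp
    omega

theorem monicsOfNatDegree_prod_eq_biUnion (a b : ℕ) :
    monicsOfNatDegree F a ×ˢ monicsOfNatDegree F b =
      ⋃ j ∈ (Finset.range (a + 1) : Set ℕ), monicPairsWithGcdDegree F a b j := by
  ext p
  simp only [Set.mem_prod, Set.mem_iUnion, Finset.coe_range, Set.mem_Iio, exists_prop]
  constructor
  · rintro ⟨⟨h1, ha⟩, h2, hb⟩
    have hp : p ∈ monicPairsWithGcdDegree F a b (gcd p.1 p.2).natDegree := ⟨h1, h2, ha, hb, rfl⟩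
    exact ⟨_, Nat.lt_succ_of_le (le_of_mem_monicPairsWithGcdDegree hp).1, hp⟩
  · rintro ⟨j, -, h1, h2, ha, hb, -⟩
    exact ⟨⟨h1, ha⟩, h2, hb⟩

theorem surjOn_mul_monicPairsWithGcdDegree (a b j : ℕ) :
    Set.SurjOn (fun x : F[X] × (F[X] × F[X]) ↦ (x.1 * x.2.1, x.1 * x.2.2))
      (monicsOfNatDegree F j ×ˢ monicPairsWithGcdDegree F a b 0)
      (monicPairsWithGcdDegree F (a + j) (b + j) j) := by
  rintro ⟨p₁, p₂⟩ ⟨h₁, h₂, hd₁, hd₂, hk⟩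
  dsimp only at h₁ h₂ hd₁ hd₂ hk
  have hg : (gcd p₁ p₂).Monic := monic_gcd_of_ne_zero_left h₁.ne_zero
  obtain ⟨u, hu⟩ := gcd_dvd_left p₁ p₂
  obtain ⟨v, hv⟩ := gcd_dvd_right p₁ p₂
  have hum : u.Monic := hg.of_mul_monic_left (hu ▸ h₁)
  have hvm : v.Monic := hg.of_mul_monic_left (hv ▸ h₂)
  have huv : gcd u v = 1 := by
    refine mul_left_cancel₀ hg.ne_zero ?_
    rw [← hg.gcd_mul_left, ← hu, ← hv, mul_one]
  refine ⟨(gcd p₁ p₂, u, v), ⟨⟨hg, hk⟩, hum, hvm, ?_, ?_, by simp [huv]⟩, by simp [← hu, ← hv]⟩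
  · show u.natDegree = a
    have := natDegree_mul hg.ne_zero hum.ne_zero
    rw [← hu, hd₁, hk] at this
    omega
  · show v.natDegree = b
    have := natDegree_mul hg.ne_zero hvm.ne_zero
    rw [← hv, hd₂, hk] at this
    omega

theorem bijOn_mul_monicPairsWithGcdDegree (a b j : ℕ) :
    Set.BijOn (fun x : F[X] × (F[X] × F[X]) ↦ (x.1 * x.2.1, x.1 * x.2.2))
      (monicsOfNatDegree F j ×ˢ monicPairsWithGcdDegree F a b 0)
      (monicPairsWithGcdDegree F (a + j) (b + j) j) := by
  refine ⟨?mapsTo, ?injOn, surjOn_mul_monicPairsWithGcdDegree a b j⟩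
  case mapsTo =>
    rintro ⟨g, u, v⟩ ⟨⟨hg, rfl⟩, hu, hv, rfl, rfl, huv⟩
    refine ⟨hg.mul hu, hg.mul hv, ?_, ?_, ?_⟩
    · rw [natDegree_mul hg.ne_zero hu.ne_zero, add_comm]
    · rw [natDegree_mul hg.ne_zero hv.ne_zero, add_comm]
    · rw [hg.gcd_mul_eq_self hu.ne_zero huv]
  case injOn =>
    rintro ⟨g, u, v⟩ ⟨⟨hg, -⟩, hu, -, -, -, huv⟩ ⟨g', u', v'⟩ ⟨⟨hg', -⟩, hu', -, -, -, huv'⟩ h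
    simp only [Prod.mk.injEq] at h hg hu huv hg' hu' huv'
    obtain ⟨hu_eq, hv_eq⟩ := h
    obtain rfl : g = g' := by
      rw [← hg.gcd_mul_eq_self hu.ne_zero huv, ← hg'.gcd_mul_eq_self hu'.ne_zero huv', hu_eq, hv_eq]
    rw [mul_left_cancel₀ hg.ne_zero hu_eq, mul_left_cancel₀ hg.ne_zero hv_eq]

variable [Fintype F]

theorem ncard_monicPairsWithGcdDegree_add (a b j : ℕ) :
    (monicPairsWithGcdDegree F (a + j) (b + j) j).ncard =
      Fintype.card F ^ j * (monicPairsWithGcdDegree F a b 0).ncard := by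
  rw [← (bijOn_mul_monicPairsWithGcdDegree a b j).ncard_eq, Set.ncard_prod,
    ncard_monicsOfNatDegree]

theorem ncard_monicPairsWithGcdDegree_succ (a b j : ℕ) :
    (monicPairsWithGcdDegree F (a + 1) (b + 1) (j + 1)).ncard =
      Fintype.card F * (monicPairsWithGcdDegree F a b j).ncard := by
  by_cases h : j ≤ a ∧ j ≤ b
  · obtain ⟨a, rfl⟩ := Nat.exists_eq_add_of_le' h.1
    obtain ⟨b, rfl⟩ := Nat.exists_eq_add_of_le' h.2
    rw [add_assoc a, add_assoc b, ncard_monicPairsWithGcdDegree_add,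
      ncard_monicPairsWithGcdDegree_add, pow_succ]
    ring
  · rw [monicPairsWithGcdDegree_eq_empty (by omega), monicPairsWithGcdDegree_eq_empty (by omega),
      Set.ncard_empty, mul_zero]

theorem sum_ncard_monicPairsWithGcdDegree (a b : ℕ) :
    ∑ j ∈ Finset.range (a + 1), (monicPairsWithGcdDegree F a b j).ncard =
      Fintype.card F ^ (a + b) := by
  have hfin (j : ℕ) : (monicPairsWithGcdDegree F a b j).Finite :=
    ((finite_monicsOfNatDegree F a).prod (finite_monicsOfNatDegree F b)).subset <|
      fun _ ⟨h1, h2, ha, hb, _⟩ ↦ ⟨⟨h1, ha⟩, h2, hb⟩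
  have hdisj : (Finset.range (a + 1) : Set ℕ).PairwiseDisjoint (monicPairsWithGcdDegree F a b) :=
    fun _ _ _ _ hij ↦ Set.disjoint_left.mpr fun _ hi hj ↦ hij (hi.2.2.2.2.symm.trans hj.2.2.2.2)
  rw [← finsum_mem_coe_finset, ← (Finset.finite_toSet _).ncard_biUnion (fun j _ ↦ hfin j) hdisj,
    ← monicsOfNatDegree_prod_eq_biUnion, Set.ncard_prod, ncard_monicsOfNatDegree,
    ncard_monicsOfNatDegree, pow_add]

theorem ncard_monicPairsWithGcdDegree_zero (a b : ℕ) :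
    (monicPairsWithGcdDegree F (a + 1) (b + 1) 0).ncard =
      Fintype.card F ^ (a + b + 2) - Fintype.card F ^ (a + b + 1) := by
  have key : Fintype.card F ^ (a + b + 2) =
      (monicPairsWithGcdDegree F (a + 1) (b + 1) 0).ncard + Fintype.card F ^ (a + b + 1) :=
    calc Fintype.card F ^ (a + b + 2)
        = ∑ j ∈ Finset.range (a + 1 + 1), (monicPairsWithGcdDegree F (a + 1) (b + 1) j).ncard := by
          rw [sum_ncard_monicPairsWithGcdDegree]; ring_nf
      _ = Fintype.card F * ∑ j ∈ Finset.range (a + 1), (monicPairsWithGcdDegree F a b j).ncard +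
            (monicPairsWithGcdDegree F (a + 1) (b + 1) 0).ncard := by
          rw [Finset.sum_range_succ', Finset.mul_sum]
          simp only [ncard_monicPairsWithGcdDegree_succ]
      _ = _ := by rw [sum_ncard_monicPairsWithGcdDegree, ← pow_succ', add_comm]
  omega

end Count

/-- Over a finite field with `q` elements, for `k < d₁` and `k < d₂`, the number of pairs of
monic polynomials of degrees `d₁, d₂` whose gcd has degree exactly `k` equals
`q^(d₁+d₂−k) − q^(d₁+d₂−k−1)`. -/
theorem count_gcd_deg_eq (F : Type*) [Field F] [Fintype F] [DecidableEq F] (q : ℕ)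
    (hq : Fintype.card F = q) (d1 d2 k : ℕ) (hk1 : k < d1) (hk2 : k < d2) :
    Set.ncard {p : F[X] × F[X] | p.1.Monic ∧ p.2.Monic ∧ p.1.natDegree = d1 ∧
        p.2.natDegree = d2 ∧ (gcd p.1 p.2).natDegree = k}
      = q ^ (d1 + d2 - k) - q ^ (d1 + d2 - k - 1) := by
  subst hq
  obtain ⟨a, rfl⟩ : ∃ a, d1 = a + 1 + k := ⟨d1 - k - 1, by omega⟩
  obtain ⟨b, rfl⟩ : ∃ b, d2 = b + 1 + k := ⟨d2 - k - 1, by omega⟩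
  change (monicPairsWithGcdDegree F (a + 1 + k) (b + 1 + k) k).ncard = _
  rw [ncard_monicPairsWithGcdDegree_add, ncard_monicPairsWithGcdDegree_zero, Nat.mul_sub,
    ← pow_add, ← pow_add]
  congr 2 <;> omega
end

section
/- Let K be a field and let u, v be monic polynomials over K of degrees d1 > 0 and d2 > 0, and let k be a natural number with k ≤ min(d1, d2). Then the greatest common divisor of u and v has degree at least k if and only if the Sylvester matrix of u and v (the (d1+d2)×(d1+d2) matrix whose determinant is the resultant of u and v) has rank at most d1 + d2 − k. -/
/-!
The Sylvester matrix is the matrix of the linear map `(p, q) ↦ u q + v p` from pairs with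
`deg p < deg u`, `deg q < deg v` to polynomials of degree `< deg u + deg v`. Write `u = d u'`,
`v = d v'` with `d = gcd u v`; since `u'` and `v'` are coprime, `u q + v p = 0` forces `p = u' c`
and `q = -v' c` with `deg c < deg d`. So the kernel has dimension `deg d`, and the rank is
`deg u + deg v - deg d`.
-/

open Polynomial

/-- The Sylvester matrix of two polynomials `u, v` of degrees `d1, d2`: the
`(d1+d2)×(d1+d2)` matrix whose first `d2` columns are the successive shifts of the
coefficient sequence of `u` and whose last `d1` columns are the successive shifts of the
coefficient sequence of `v`; its determinant is (up to sign convention) the resultant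
`Res(u, v)`. -/
noncomputable def sylvesterMatrix {K : Type*} [Field K] (d1 d2 : ℕ) (u v : K[X]) :
    Matrix (Fin (d1 + d2)) (Fin (d1 + d2)) K :=
  fun i j =>
    if (j : ℕ) < d2 then
      (if (j : ℕ) ≤ (i : ℕ) then u.coeff ((i : ℕ) - (j : ℕ)) else 0)
    else
      (if (j : ℕ) - d2 ≤ (i : ℕ) then v.coeff ((i : ℕ) - ((j : ℕ) - d2)) else 0)

open Module

theorem IsRelPrime.exists_eq_mul_of_mul_add_mul_eq_zero {α : Type*} [CommRing α] [IsDomain α]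
    [DecompositionMonoid α] {a b p q : α} (hab : IsRelPrime a b) (ha : a ≠ 0)
    (h : a * q + b * p = 0) : ∃ c, p = a * c ∧ q = -(b * c) := by
  obtain ⟨c, rfl⟩ : a ∣ p := hab.dvd_of_dvd_mul_left ⟨-q, by linear_combination h⟩
  refine ⟨c, rfl, ?_⟩
  have : a * (q + b * c) = 0 := by linear_combination h
  linear_combination (mul_eq_zero.1 this).resolve_left ha

namespace Polynomial

theorem finrank_degreeLT {R : Type*} [Semiring R] [StrongRankCondition R] (n : ℕ) :
    finrank R R[X]_n = n := by
  simp [finrank_eq_card_basis (degreeLT.basis R n)]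

theorem mul_mem_degreeLT_iff {R : Type*} [Semiring R] [NoZeroDivisors R] {a c : R[X]}
    (ha : a ≠ 0) {e m : ℕ} (h : a.natDegree + e = m) : a * c ∈ R[X]_m ↔ c ∈ R[X]_e := by
  subst h
  rw [mem_degreeLT, mem_degreeLT, degree_mul, degree_eq_natDegree ha, Nat.cast_add]
  exact WithBot.add_lt_add_iff_left WithBot.coe_ne_bot

theorem ite_coeff_sub_eq_of_natDegree_le {R : Type*} [Semiring R] {p : R[X]} {n : ℕ}
    (hp : p.natDegree ≤ n) (i j : ℕ) :
    (if j ≤ i then p.coeff (i - j) else 0) =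
      if j ≤ i ∧ i ≤ j + n then p.coeff (i - j) else 0 := by
  by_cases h : i ≤ j + n
  · simp [h]
  · simp [h, coeff_eq_zero_of_natDegree_lt (show p.natDegree < i - j by omega)]

theorem rank_sylvester_eq_finrank_range_sylvesterMap {R : Type*} [CommRing R] {m n : ℕ}
    (f g : R[X]) (hf : f.natDegree ≤ m) (hg : g.natDegree ≤ n) :
    (sylvester f g m n).rank = finrank R (LinearMap.range (sylvesterMap f g hf hg)) := by
  rw [Matrix.rank_eq_finrank_range_toLin _ (degreeLT.basis R (m + n))
      (((degreeLT.basis R m).prod (degreeLT.basis R n)).reindex finSumFinEquiv),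
    ← toMatrix_sylvesterMap' f g hf hg, Matrix.toLin_toMatrix]

section Field

variable {K : Type*} [Field K] [DecidableEq K]

theorem finrank_ker_sylvesterMap {f g : K[X]} {m n : ℕ} (hf0 : f ≠ 0) (hg0 : g ≠ 0)
    (hf : f.natDegree = m) (hg : g.natDegree = n) :
    finrank K (LinearMap.ker (sylvesterMap f g hf.le hg.le)) = (gcd f g).natDegree := by
  obtain ⟨f', g', hff', hgg', hunit⟩ := extract_gcd f g
  set d := gcd f g
  have hd0 : d ≠ 0 := fun h => hf0 ((gcd_eq_zero_iff f g).1 h).1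
  have hf'0 : f' ≠ 0 := right_ne_zero_of_mul (hff' ▸ hf0)
  have hg'0 : g' ≠ 0 := right_ne_zero_of_mul (hgg' ▸ hg0)
  have hf'deg : f'.natDegree + d.natDegree = m := by
    rw [← hf, hff', natDegree_mul hd0 hf'0, add_comm]
  have hg'deg : g'.natDegree + d.natDegree = n := by
    rw [← hg, hgg', natDegree_mul hd0 hg'0, add_comm]
  let θ : K[X]_d.natDegree →ₗ[K] K[X]_m × K[X]_n :=
    ((LinearMap.mulLeft K f').restrict fun _ hc => (mul_mem_degreeLT_iff hf'0 hf'deg).2 hc).prod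
      (-(LinearMap.mulLeft K g').restrict fun _ hc => (mul_mem_degreeLT_iff hg'0 hg'deg).2 hc)
  have hθ_inj : Function.Injective θ := by
    rw [← LinearMap.ker_eq_bot, LinearMap.ker_eq_bot']
    intro c hc
    have : f' * c = 0 := congrArg Subtype.val (congrArg Prod.fst hc)
    exact Subtype.ext ((mul_eq_zero.1 this).resolve_left hf'0)
  have hθ_range : LinearMap.range θ = LinearMap.ker (sylvesterMap f g hf.le hg.le) := by
    apply le_antisymm
    · rintro _ ⟨c, rfl⟩
      rw [LinearMap.mem_ker, Subtype.ext_iff]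
      change f * -(g' * c) + g * (f' * c) = 0
      rw [hff', hgg']
      ring
    · rintro ⟨⟨p, hp⟩, ⟨q, _⟩⟩ hpq
      have hsum : f' * q + g' * p = 0 := by
        have : d * (f' * q + g' * p) = 0 := by
          simpa [LinearMap.mem_ker, Subtype.ext_iff, hff', hgg', mul_add, mul_assoc] using hpq
        exact (mul_eq_zero.1 this).resolve_left hd0
      obtain ⟨c, rfl, rfl⟩ :=
        (gcd_isUnit_iff_isRelPrime.1 hunit).exists_eq_mul_of_mul_add_mul_eq_zero hf'0 hsum
      exact ⟨⟨c, (mul_mem_degreeLT_iff hf'0 hf'deg).1 hp⟩, rfl⟩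
  rw [← hθ_range, LinearMap.finrank_range_of_inj hθ_inj, finrank_degreeLT]

theorem rank_sylvester_add_natDegree_gcd {f g : K[X]} {m n : ℕ} (hf0 : f ≠ 0) (hg0 : g ≠ 0)
    (hf : f.natDegree = m) (hg : g.natDegree = n) :
    (sylvester f g m n).rank + (gcd f g).natDegree = m + n := by
  rw [rank_sylvester_eq_finrank_range_sylvesterMap f g hf.le hg.le,
    ← finrank_ker_sylvesterMap hf0 hg0 hf hg, LinearMap.finrank_range_add_finrank_ker,
    finrank_prod, finrank_degreeLT, finrank_degreeLT]

end Field

end Polynomial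

theorem sylvesterMatrix_eq_reindex_sylvester {K : Type*} [Field K] {d1 d2 : ℕ} {u v : K[X]}
    (hu : u.natDegree ≤ d1) (hv : v.natDegree ≤ d2) :
    sylvesterMatrix d1 d2 u v =
      (sylvester v u d2 d1).reindex (finCongr (add_comm d2 d1)) (finCongr (add_comm d2 d1)) := by
  ext i j
  obtain ⟨j, rfl⟩ := (finCongr (add_comm d2 d1)).surjective j
  induction j using Fin.addCases with
  | left j => simpa [sylvesterMatrix, sylvester] using ite_coeff_sub_eq_of_natDegree_le hu i j
  | right j => simpa [sylvesterMatrix, sylvester] using ite_coeff_sub_eq_of_natDegree_le hv i j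

theorem gcd_deg_ge_iff_sylvester_rank_le_general (K : Type*) [Field K] [DecidableEq K]
    (d1 d2 k : ℕ) (hk : k ≤ min d1 d2)
    (u v : K[X]) (hu : u.Monic) (hv : v.Monic)
    (hud : u.natDegree = d1) (hvd : v.natDegree = d2) :
    k ≤ (gcd u v).natDegree ↔ (sylvesterMatrix d1 d2 u v).rank ≤ d1 + d2 - k := by
  have hrank : (sylvesterMatrix d1 d2 u v).rank + (gcd u v).natDegree = d1 + d2 := by
    rw [sylvesterMatrix_eq_reindex_sylvester hud.le hvd.le, Matrix.rank_reindex, gcd_comm,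
      rank_sylvester_add_natDegree_gcd hv.ne_zero hu.ne_zero hvd hud, add_comm d2]
  omega

/-- For monic polynomials `u, v` of degrees `d₁, d₂ > 0` and `k ≤ min(d₁, d₂)`, the gcd of
`u` and `v` has degree at least `k` if and only if the Sylvester matrix of `u` and `v` has
rank at most `d₁ + d₂ − k`. -/
theorem gcd_deg_ge_iff_sylvester_rank_le (K : Type*) [Field K] [DecidableEq K]
    (d1 d2 k : ℕ) (hd1 : 0 < d1) (hd2 : 0 < d2) (hk : k ≤ min d1 d2)
    (u v : K[X]) (hu : u.Monic) (hv : v.Monic)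
    (hud : u.natDegree = d1) (hvd : v.natDegree = d2) :
    k ≤ (gcd u v).natDegree ↔ (sylvesterMatrix d1 d2 u v).rank ≤ d1 + d2 - k :=
  gcd_deg_ge_iff_sylvester_rank_le_general K d1 d2 k hk u v hu hv hud hvd
end
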